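/- arXiv:2002.09968 — 2 statements merged into one kernel-verified Lean document; each statement's English description precedes it below -/
import Mathlib

section
/- Let W_h be a random variable with the (asymmetric-shifted Gaussian) density π_h(x) = k_h^{−1} exp[−((x−h)² 1{x≤0} + (x+h)² 1{x>0})/2], where k_h = 2√(2π)Φ(−h). Then as h → ∞: (i) P(W_h ≤ 0) = 1/2 for every h; (ii) h·E[W_h·1{W_h ≤ 0}] → −1/2; (iii) h²·E[W_h²·1{W_h ≤ 0}] → 1. -/
open Real MeasureTheory ProbabilityTheory Filter
open Set Topology

/-!
On `(-∞, 0]` the density is `e^{-(x-h)²/2} / (2Q(h))` with `Q(h) = ∫ₕ^∞ e^{-x²/2} dx`, since by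
symmetry `k_h = 2Q(h)`. The substitution `x = h - y` turns the truncated moments of order 0, 1, 2
into `1/2`, `(hQ - φ)/(2Q)` and `((1 + h²)Q - hφ)/(2Q)`, where `φ = e^{-h²/2}`. Both limits then
come down to the expansion `φ/Q = h + h⁻¹ - 2h⁻³ + O(h⁻⁵)` of the inverse Mills ratio, which
follows from three integrations by parts:
`Q = φ (h⁻¹ - h⁻³ + 3h⁻⁵) - 15 ∫ₕ^∞ x⁻⁶ e^{-x²/2} dx`, the remainder lying between `0` and `h⁻⁶ Q`.
-/

theorem integrable_pow_mul_exp_neg_sq_div_two (n : ℕ) :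
    Integrable fun x : ℝ => x ^ n * exp (-x ^ 2 / 2) := by
  have := integrable_rpow_mul_exp_neg_mul_sq (b := 1 / 2) (by norm_num) (s := n)
    (by linarith [n.cast_nonneg (α := ℝ)])
  simpa [Real.rpow_natCast, neg_div, div_eq_inv_mul] using this

theorem integrable_exp_neg_sq_div_two : Integrable fun x : ℝ => exp (-x ^ 2 / 2) := by
  simpa using integrable_pow_mul_exp_neg_sq_div_two 0

theorem hasDerivAt_exp_neg_sq_div_two (x : ℝ) :
    HasDerivAt (fun y : ℝ => exp (-y ^ 2 / 2)) (-x * exp (-x ^ 2 / 2)) x := by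
  have hquad : HasDerivAt (fun y : ℝ => -y ^ 2 / 2) (-x) x := by
    refine ((hasDerivAt_pow 2 x).neg.div_const 2).congr_deriv ?_
    ring
  exact hquad.exp.congr_deriv (mul_comm _ _)

theorem tendsto_exp_neg_sq_div_two_atTop :
    Tendsto (fun x : ℝ => exp (-x ^ 2 / 2)) atTop (𝓝 0) := by
  refine tendsto_exp_atBot.comp ?_
  simpa only [neg_div, Function.comp_def] using tendsto_neg_atTop_atBot.comp
    ((tendsto_pow_atTop two_ne_zero).atTop_div_const (by norm_num : (0 : ℝ) < 2))

theorem tendsto_mul_exp_neg_sq_div_two_atTop :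
    Tendsto (fun x : ℝ => x * exp (-x ^ 2 / 2)) atTop (𝓝 0) := by
  have hexp := (tendsto_pow_mul_exp_neg_atTop_nhds_zero 1).comp
    ((tendsto_pow_atTop two_ne_zero).atTop_div_const (by norm_num : (0 : ℝ) < 2))
  have hprod := ((tendsto_inv_atTop_zero (𝕜 := ℝ)).const_mul 2).mul hexp
  simp only [mul_zero] at hprod
  refine hprod.congr' ?_
  filter_upwards [eventually_ne_atTop 0] with x hx
  simp only [Function.comp, pow_one, neg_div]
  field_simp

/-- `√(2π) Φ(-h)`, so that `k_h = 2 gaussTail h`. -/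
noncomputable def gaussTail (h : ℝ) : ℝ := ∫ x in Ioi h, exp (-x ^ 2 / 2)

/-- The inverse Mills ratio `φ(h) / (1 - Φ(h))`. -/
noncomputable def invMillsRatio (h : ℝ) : ℝ := exp (-h ^ 2 / 2) / gaussTail h

theorem gaussTail_pos (h : ℝ) : 0 < gaussTail h := by
  refine (setIntegral_pos_iff_support_of_nonneg_ae
    (Eventually.of_forall fun x => (exp_pos _).le) integrable_exp_neg_sq_div_two.integrableOn).2 ?_
  simp [Function.support, (exp_pos _).ne']

theorem integral_Iic_neg_exp_neg_sq_div_two (h : ℝ) :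
    ∫ x in Iic (-h), exp (-x ^ 2 / 2) = gaussTail h := by
  rw [gaussTail, ← integral_comp_neg_Ioi]
  simp only [neg_sq]

theorem integral_Ioi_mul_exp_neg_sq_div_two (h : ℝ) :
    ∫ x in Ioi h, x * exp (-x ^ 2 / 2) = exp (-h ^ 2 / 2) := by
  have hderiv : ∀ x ∈ Ici h,
      HasDerivAt (fun y : ℝ => -exp (-y ^ 2 / 2)) (x * exp (-x ^ 2 / 2)) x := fun x _ =>
    (hasDerivAt_exp_neg_sq_div_two x).neg.congr_deriv (by ring)
  rw [integral_Ioi_of_hasDerivAt_of_tendsto' hderiv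
    (by simpa using (integrable_pow_mul_exp_neg_sq_div_two 1).integrableOn)
    (by simpa using tendsto_exp_neg_sq_div_two_atTop.neg)]
  ring

theorem integral_Ioi_sq_mul_exp_neg_sq_div_two (h : ℝ) :
    ∫ x in Ioi h, x ^ 2 * exp (-x ^ 2 / 2) = h * exp (-h ^ 2 / 2) + gaussTail h := by
  have hderiv : ∀ x ∈ Ici h, HasDerivAt (fun y : ℝ => -(y * exp (-y ^ 2 / 2)))
      (x ^ 2 * exp (-x ^ 2 / 2) - exp (-x ^ 2 / 2)) x := fun x _ =>
    ((hasDerivAt_id x).mul (hasDerivAt_exp_neg_sq_div_two x)).neg.congr_deriv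
      (by simp only [id]; ring)
  have hparts := integral_Ioi_of_hasDerivAt_of_tendsto' hderiv
    ((integrable_pow_mul_exp_neg_sq_div_two 2).sub integrable_exp_neg_sq_div_two).integrableOn
    (by simpa using tendsto_mul_exp_neg_sq_div_two_atTop.neg)
  rw [integral_sub (integrable_pow_mul_exp_neg_sq_div_two 2).integrableOn
    integrable_exp_neg_sq_div_two.integrableOn] at hparts
  rw [gaussTail]
  linarith

theorem integral_Iic_zero_eq_integral_Ioi_sub (h : ℝ) (f : ℝ → ℝ) :
    ∫ x in Iic 0, f x = ∫ y in Ioi h, f (h - y) := by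
  rw [integral_Iic_eq_integral_Iio, ← (Measure.measurePreserving_sub_left volume h)
    |>.setIntegral_preimage_emb (measurableEmbedding_subLeft h) f (Iio 0)]
  congr 1
  ext y
  simp

theorem integral_Ioi_quadratic_mul_exp_neg_sq_div_two (a b c h : ℝ) :
    ∫ x in Ioi h, (a + b * x + c * x ^ 2) * exp (-x ^ 2 / 2) =
      (a + c) * gaussTail h + (b + c * h) * exp (-h ^ 2 / 2) := by
  have hint := fun n => (integrable_pow_mul_exp_neg_sq_div_two n).integrableOn (s := Ioi h)
  have hsplit : (fun x : ℝ => (a + b * x + c * x ^ 2) * exp (-x ^ 2 / 2)) = fun x =>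
      (a * (x ^ 0 * exp (-x ^ 2 / 2)) + b * (x ^ 1 * exp (-x ^ 2 / 2))) +
        c * (x ^ 2 * exp (-x ^ 2 / 2)) := by
    ext x
    ring
  rw [hsplit, integral_add _ ((hint 2).const_mul c),
    integral_add ((hint 0).const_mul a) ((hint 1).const_mul b),
    integral_const_mul, integral_const_mul, integral_const_mul]
  · simp only [pow_zero, one_mul, pow_one]
    rw [integral_Ioi_mul_exp_neg_sq_div_two, integral_Ioi_sq_mul_exp_neg_sq_div_two, ← gaussTail]
    ring
  · exact ((hint 0).const_mul a).add ((hint 1).const_mul b)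

theorem integral_Iic_zero_exp_neg_sub_sq_div_two (h : ℝ) :
    ∫ x in Iic 0, exp (-(x - h) ^ 2 / 2) = gaussTail h := by
  rw [integral_Iic_zero_eq_integral_Ioi_sub h, gaussTail]
  simp only [sub_sub_cancel_left, neg_sq]

theorem integral_Iic_zero_mul_exp_neg_sub_sq_div_two (h : ℝ) :
    ∫ x in Iic 0, x * exp (-(x - h) ^ 2 / 2) = h * gaussTail h - exp (-h ^ 2 / 2) := by
  have hquad : ∀ y : ℝ, (h - y) * exp (-(h - y - h) ^ 2 / 2) =
      (h + -1 * y + 0 * y ^ 2) * exp (-y ^ 2 / 2) := fun y => by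
    simp only [sub_sub_cancel_left, neg_sq]
    ring
  rw [integral_Iic_zero_eq_integral_Ioi_sub h, funext hquad,
    integral_Ioi_quadratic_mul_exp_neg_sq_div_two]
  ring

theorem integral_Iic_zero_sq_mul_exp_neg_sub_sq_div_two (h : ℝ) :
    ∫ x in Iic 0, x ^ 2 * exp (-(x - h) ^ 2 / 2) =
      (1 + h ^ 2) * gaussTail h - h * exp (-h ^ 2 / 2) := by
  have hquad : ∀ y : ℝ, (h - y) ^ 2 * exp (-(h - y - h) ^ 2 / 2) =
      (h ^ 2 + -2 * h * y + 1 * y ^ 2) * exp (-y ^ 2 / 2) := fun y => by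
    simp only [sub_sub_cancel_left, neg_sq]
    ring
  rw [integral_Iic_zero_eq_integral_Ioi_sub h, funext hquad,
    integral_Ioi_quadratic_mul_exp_neg_sq_div_two]
  ring

section Mills

variable {h : ℝ}

theorem integrableOn_Ioi_inv_pow_mul_exp_neg_sq_div_two (k : ℕ) (hh : 0 < h) :
    IntegrableOn (fun x : ℝ => x⁻¹ ^ k * exp (-x ^ 2 / 2)) (Ioi h) := by
  refine (integrable_exp_neg_sq_div_two.integrableOn.const_mul (h⁻¹ ^ k)).mono' (by fun_prop) ?_
  filter_upwards [ae_restrict_mem measurableSet_Ioi] with x hx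
  have hx0 : 0 < x := hh.trans hx
  rw [norm_mul, norm_of_nonneg (exp_pos _).le, norm_pow, norm_inv, norm_of_nonneg hx0.le]
  gcongr
  exact hx.le

theorem integral_Ioi_inv_pow_mul_exp_neg_sq_div_two_recurrence (k : ℕ) (hh : 0 < h) :
    (k + 1) * (∫ x in Ioi h, x⁻¹ ^ (k + 2) * exp (-x ^ 2 / 2)) +
        ∫ x in Ioi h, x⁻¹ ^ k * exp (-x ^ 2 / 2) = h⁻¹ ^ (k + 1) * exp (-h ^ 2 / 2) := by
  have hderiv : ∀ x ∈ Ici h, HasDerivAt (fun y : ℝ => -(y⁻¹ ^ (k + 1) * exp (-y ^ 2 / 2)))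
      ((k + 1) * (x⁻¹ ^ (k + 2) * exp (-x ^ 2 / 2)) + x⁻¹ ^ k * exp (-x ^ 2 / 2)) x := by
    intro x hx
    have hx0 : x ≠ 0 := (hh.trans_le hx).ne'
    have hpow : HasDerivAt (fun y : ℝ => y⁻¹ ^ (k + 1)) ((k + 1 : ℕ) * x⁻¹ ^ k * -(x ^ 2)⁻¹) x :=
      (hasDerivAt_inv hx0).pow (k + 1)
    refine (hpow.mul (hasDerivAt_exp_neg_sq_div_two x)).neg.congr_deriv ?_
    rw [← inv_pow]
    push_cast
    linear_combination (x⁻¹ ^ k * exp (-x ^ 2 / 2)) * inv_mul_cancel₀ hx0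
  have hint := fun k => integrableOn_Ioi_inv_pow_mul_exp_neg_sq_div_two (h := h) k hh
  have htendsto : Tendsto (fun y : ℝ => -(y⁻¹ ^ (k + 1) * exp (-y ^ 2 / 2))) atTop (𝓝 0) := by
    simpa using ((tendsto_inv_atTop_zero.pow (k + 1)).mul tendsto_exp_neg_sq_div_two_atTop).neg
  rw [← integral_const_mul, ← integral_add ((hint _).const_mul _) (hint k),
    integral_Ioi_of_hasDerivAt_of_tendsto' hderiv (((hint _).const_mul _).add (hint k)) htendsto]
  ring

theorem exists_gaussTail_eq_asymptotic_sub (hh : 0 < h) :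
    ∃ R, 0 ≤ R ∧ R ≤ h⁻¹ ^ 6 * gaussTail h ∧
      gaussTail h = exp (-h ^ 2 / 2) * (h⁻¹ - h⁻¹ ^ 3 + 3 * h⁻¹ ^ 5) - 15 * R := by
  have hrec := fun k => integral_Ioi_inv_pow_mul_exp_neg_sq_div_two_recurrence k hh
  refine ⟨∫ x in Ioi h, x⁻¹ ^ 6 * exp (-x ^ 2 / 2), ?_, ?_, ?_⟩
  · refine setIntegral_nonneg measurableSet_Ioi fun x hx => ?_
    have : 0 < x := hh.trans hx
    positivity
  · rw [gaussTail, ← integral_const_mul]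
    refine setIntegral_mono_on (integrableOn_Ioi_inv_pow_mul_exp_neg_sq_div_two 6 hh)
      (integrable_exp_neg_sq_div_two.integrableOn.const_mul _) measurableSet_Ioi fun x hx => ?_
    have : 0 < x := hh.trans hx
    gcongr
    exact hx.le
  · have h0 := hrec 0
    have h2 := hrec 2
    have h4 := hrec 4
    simp only [pow_zero, one_mul, gaussTail] at h0 ⊢
    push_cast at h0 h2 h4
    linear_combination h0 - h2 + 3 * h4

theorem abs_invMillsRatio_expansion_add_two_le (hh : 1 ≤ h) :
    |h ^ 3 * (invMillsRatio h - h - h⁻¹) + 2| ≤ 32 / h ^ 2 := by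
  have h0 : 0 < h := one_pos.trans_le hh
  obtain ⟨R, hR0, hR, hQ⟩ := exists_gaussTail_eq_asymptotic_sub h0
  have hQ0 := gaussTail_pos h
  set Q := gaussTail h
  set E := exp (-h ^ 2 / 2)
  set t := h ^ 3 * (invMillsRatio h - h - h⁻¹) + 2
  have hQ' : h ^ 5 * Q = E * (h ^ 4 - h ^ 2 + 3) - 15 * h ^ 5 * R := by
    rw [hQ]
    field_simp
  have hD : h ^ 4 / 2 ≤ h ^ 4 - h ^ 2 + 3 := by nlinarith [sq_nonneg (h ^ 2 - 1)]
  have hDpos : 0 < h ^ 4 - h ^ 2 + 3 := by nlinarith [sq_nonneg (h ^ 2 - 1)]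
  have ht : t * (h ^ 4 - h ^ 2 + 3) = 15 * (h ^ 8 * (R / Q)) - 5 * h ^ 2 + 6 := by
    rw [show t = h ^ 3 * (E / Q - h - h⁻¹) + 2 from rfl]
    field_simp
    linear_combination (-h ^ 3) * hQ'
  have hρ : h ^ 8 * (R / Q) ≤ h ^ 2 := by
    calc h ^ 8 * (R / Q) ≤ h ^ 8 * h⁻¹ ^ 6 := by gcongr; rwa [div_le_iff₀ hQ0]
      _ = h ^ 2 := by field_simp
  have hρ0 : 0 ≤ h ^ 8 * (R / Q) := by positivity
  have htD : |t| * (h ^ 4 / 2) ≤ 16 * h ^ 2 := by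
    calc |t| * (h ^ 4 / 2) ≤ |t| * (h ^ 4 - h ^ 2 + 3) := by gcongr
      _ = |t * (h ^ 4 - h ^ 2 + 3)| := by rw [abs_mul, abs_of_pos hDpos]
      _ ≤ 16 * h ^ 2 := by
        rw [ht, abs_le]
        constructor <;> nlinarith
  rw [le_div_iff₀ (by positivity)]
  nlinarith [pow_pos h0 2]

end Mills

theorem tendsto_invMillsRatio_expansion :
    Tendsto (fun h : ℝ => h ^ 3 * (invMillsRatio h - h - h⁻¹)) atTop (𝓝 (-2)) := by
  have hbound : Tendsto (fun h : ℝ => 32 / h ^ 2) atTop (𝓝 0) := by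
    simpa [div_eq_mul_inv] using (tendsto_inv_atTop_zero.pow 2).const_mul (32 : ℝ)
  rw [tendsto_iff_norm_sub_tendsto_zero]
  refine squeeze_zero' (Eventually.of_forall fun _ => norm_nonneg _) ?_ hbound
  filter_upwards [eventually_ge_atTop 1] with h hh
  simpa [Real.norm_eq_abs] using abs_invMillsRatio_expansion_add_two_le hh

theorem tendsto_mul_invMillsRatio_sub :
    Tendsto (fun h : ℝ => h * (invMillsRatio h - h)) atTop (𝓝 1) := by
  have hlim := ((tendsto_inv_atTop_zero.pow 2).mul tendsto_invMillsRatio_expansion).const_add 1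
  rw [zero_pow two_ne_zero, zero_mul, add_zero] at hlim
  refine hlim.congr' ?_
  filter_upwards [eventually_ne_atTop 0] with h hh
  field_simp
  ring

theorem sqrt_two_pi_mul_integral_Iic_neg_gaussian (h : ℝ) :
    √(2 * π) * ∫ u in Iic (-h), (√(2 * π))⁻¹ * exp (-u ^ 2 / 2) = gaussTail h := by
  rw [integral_const_mul, integral_Iic_neg_exp_neg_sq_div_two, ← mul_assoc,
    mul_inv_cancel₀ (by positivity), one_mul]

theorem integral_ite_nonpos_eq_setIntegral_mul_of_map_eq_withDensity
    {Ω : Type*} [MeasurableSpace Ω] {μ : Measure Ω} {X : Ω → ℝ} (hX : Measurable X)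
    {f : ℝ → ℝ} (hf : Measurable f) (hf0 : ∀ x, 0 ≤ f x)
    (hlaw : μ.map X = volume.withDensity fun x => ENNReal.ofReal (f x))
    {q : ℝ → ℝ} (hq : Measurable q) :
    ∫ ω, (if X ω ≤ 0 then q (X ω) else 0) ∂μ = ∫ x in Iic 0, f x * q x := by
  have hg : Measurable fun x : ℝ => if x ≤ 0 then q x else 0 :=
    hq.ite measurableSet_Iic measurable_const
  rw [← integral_map hX.aemeasurable hg.aestronglyMeasurable, hlaw,
    integral_withDensity_eq_integral_toReal_smul hf.ennreal_ofReal
      (Eventually.of_forall fun _ => ENNReal.ofReal_lt_top),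
    ← integral_indicator measurableSet_Iic]
  congr 1
  ext x
  by_cases hx : x ≤ 0 <;> simp [hx, ENNReal.toReal_ofReal (hf0 x)]

theorem integral_ite_nonpos_eq_of_map_eq_withDensity_gaussian {Ω : Type*} [MeasurableSpace Ω]
    {μ : Measure Ω} {X : Ω → ℝ} (hX : Measurable X) {h : ℝ} {f : ℝ → ℝ}
    (hf : ∀ x, f x = (2 * gaussTail h)⁻¹ *
      exp (-(if x ≤ 0 then (x - h) ^ 2 else (x + h) ^ 2) / 2))
    (hlaw : μ.map X = volume.withDensity fun x => ENNReal.ofReal (f x))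
    {q : ℝ → ℝ} (hq : Measurable q) :
    ∫ ω, (if X ω ≤ 0 then q (X ω) else 0) ∂μ =
      (2 * gaussTail h)⁻¹ * ∫ x in Iic 0, q x * exp (-(x - h) ^ 2 / 2) := by
  have hf0 : ∀ x, 0 ≤ f x := fun x => by
    rw [hf]
    have := gaussTail_pos h
    positivity
  have hfmeas : Measurable f := by
    rw [funext hf]
    exact measurable_const.mul ((Measurable.ite measurableSet_Iic (by fun_prop)
      (by fun_prop)).neg.div_const 2).exp
  rw [integral_ite_nonpos_eq_setIntegral_mul_of_map_eq_withDensity hX hfmeas hf0 hlaw hq,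
    ← integral_const_mul]
  refine setIntegral_congr_fun measurableSet_Iic fun x hx => ?_
  rw [hf, if_pos (show x ≤ 0 from hx)]
  ring

theorem stmt_4_general {Ω : Type*} [MeasureSpace Ω]
    (W : ℝ → Ω → ℝ) (hmeas : ∀ h, Measurable (W h))
    (p : ℝ → ℝ → ℝ)
    (hp : ∀ h x, p h x =
      (2 * Real.sqrt (2 * π) *
          ∫ u in Set.Iic (-h), (Real.sqrt (2 * π))⁻¹ * Real.exp (-u ^ 2 / 2))⁻¹ *
        Real.exp (-(if x ≤ 0 then (x - h) ^ 2 else (x + h) ^ 2) / 2))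
    (hlaw : ∀ h : ℝ, 0 < h →
      Measure.map (W h) ℙ = volume.withDensity fun x => ENNReal.ofReal (p h x)) :
    (∀ h : ℝ, 0 < h → (ℙ {ω | W h ω ≤ 0}).toReal = 1 / 2) ∧
    Tendsto (fun h : ℝ => h * ∫ ω, (if W h ω ≤ 0 then W h ω else 0) ∂ℙ)
      atTop (nhds (-(1 / 2))) ∧
    Tendsto (fun h : ℝ => h ^ 2 * ∫ ω, (if W h ω ≤ 0 then (W h ω) ^ 2 else 0) ∂ℙ)
      atTop (nhds 1) := by
  have hlower : ∀ h, 0 < h → ∀ {q : ℝ → ℝ}, Measurable q →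
      ∫ ω, (if W h ω ≤ 0 then q (W h ω) else 0) ∂ℙ =
        (2 * gaussTail h)⁻¹ * ∫ x in Iic 0, q x * exp (-(x - h) ^ 2 / 2) := fun h hh _ hq =>
    integral_ite_nonpos_eq_of_map_eq_withDensity_gaussian (hmeas h) (f := p h)
      (fun x => by rw [hp, mul_assoc, sqrt_two_pi_mul_integral_Iic_neg_gaussian]) (hlaw h hh) hq
  have hQ := fun h => (gaussTail_pos h).ne'
  refine ⟨fun h hh => ?_, ?_, ?_⟩
  · have hprob : (ℙ {ω | W h ω ≤ 0}).toReal = ∫ ω, (if W h ω ≤ 0 then (1 : ℝ) else 0) ∂ℙ := by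
      rw [← measureReal_def, ← integral_indicator_one (measurableSet_le (hmeas h) measurable_const)]
      simp [Set.indicator_apply]
    rw [hprob, hlower h hh measurable_const]
    simp only [one_mul, integral_Iic_zero_exp_neg_sub_sq_div_two]
    field_simp [hQ h]
  · have hlim := tendsto_mul_invMillsRatio_sub.const_mul (-(1 / 2) : ℝ)
    rw [mul_one] at hlim
    refine hlim.congr' ?_
    filter_upwards [eventually_gt_atTop 0] with h hh
    rw [hlower h hh (q := fun x => x) measurable_id, integral_Iic_zero_mul_exp_neg_sub_sq_div_two,
      invMillsRatio]
    field_simp [hQ h]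
    ring
  · have hlim := tendsto_invMillsRatio_expansion.const_mul (-(1 / 2) : ℝ)
    rw [show -(1 / 2) * -2 = (1 : ℝ) by norm_num] at hlim
    refine hlim.congr' ?_
    filter_upwards [eventually_gt_atTop 0] with h hh
    rw [hlower h hh (q := (· ^ 2)) (measurable_id.pow_const 2),
      integral_Iic_zero_sq_mul_exp_neg_sub_sq_div_two, invMillsRatio]
    field_simp [hQ h]
    ring

/-- Let `W h` be a random variable with density
`π_h(x) = k_h⁻¹ exp(-((x-h)² 1{x≤0} + (x+h)² 1{x>0})/2)`, `k_h = 2√(2π)Φ(-h)`.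
Then (i) `P(W h ≤ 0) = 1/2` for every `h > 0`;
(ii) `h · E[W h · 1{W h ≤ 0}] → -1/2` as `h → ∞`;
(iii) `h² · E[(W h)² · 1{W h ≤ 0}] → 1` as `h → ∞`. -/
theorem stmt_4 {Ω : Type*} [MeasureSpace Ω] [IsProbabilityMeasure (ℙ : Measure Ω)]
    (W : ℝ → Ω → ℝ) (hmeas : ∀ h, Measurable (W h))
    (p : ℝ → ℝ → ℝ)
    (hp : ∀ h x, p h x =
      (2 * Real.sqrt (2 * π) *
          ∫ u in Set.Iic (-h), (Real.sqrt (2 * π))⁻¹ * Real.exp (-u ^ 2 / 2))⁻¹ *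
        Real.exp (-(if x ≤ 0 then (x - h) ^ 2 else (x + h) ^ 2) / 2))
    (hlaw : ∀ h : ℝ, 0 < h →
      Measure.map (W h) ℙ = volume.withDensity fun x => ENNReal.ofReal (p h x)) :
    (∀ h : ℝ, 0 < h → (ℙ {ω | W h ω ≤ 0}).toReal = 1 / 2) ∧
    Tendsto (fun h : ℝ => h * ∫ ω, (if W h ω ≤ 0 then W h ω else 0) ∂ℙ)
      atTop (nhds (-(1 / 2))) ∧
    Tendsto (fun h : ℝ => h ^ 2 * ∫ ω, (if W h ω ≤ 0 then (W h ω) ^ 2 else 0) ∂ℙ)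
      atTop (nhds 1) :=
  stmt_4_general W hmeas p hp hlaw
end

section
/- Let |θ| < 1, let (ε_t) be i.i.d. with mean zero and variance σ², let X_0 = 0, ε_0 = 0, and X_t = X_{t−1} + ε_t − θε_{t−1}. Fix τ ∈ ℝ and a positive integer k, and define D_{n,k} = n^{−1}·∂ℓ/∂φ_{1,1} − A_{n,k}, where n^{−1}∂ℓ/∂φ_{1,1} = n^{−1/2} Σ_{t=1}^{n} (ε_t/σ) Σ_{j=0}^{t−1} θ^j (X_{t−1−j}/(n^{1/2}σ)) 1{X_{t−1−j} ≤ n^{1/2}(1−θ)στ} and A_{n,k} is the same double sum but with t ranging from k+1 to n and j from 0 to k. Then E[D_{n,k}] = 0 and Var(D_{n,k}) ≤ (K/(1−|θ|)²)·{k(k−1)/(2n²) + |θ|^{k+1}/2}, where K > 0 is any constant with E[X_t²] ≤ tKσ² for all t ≥ 1. -/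
/-!
Reindexed by `i = t - 1`, `D = (√n σ)⁻¹ Σ_{i<n} ε_{i+1} S_i`, where `S_i` is a weighted sum of
the truncated values of `X_{i-j}`, `j ∈ [lagStart k i, i]`, hence a function of `ε_1, …, ε_i`.
As `ε_{i+1}` is centred and independent of that past, the summands are orthogonal:
`E D = 0` and `E D² = (n σ²)⁻¹ Σ_i σ² E S_i²`. Cauchy–Schwarz and `E X_m² ≤ m K σ²` give
`E S_i² ≤ (Σ_j |θ|^j)² i K / n`, where the geometric sum is at most `(1 - |θ|)⁻¹`, and at most
`|θ|^{k+1} (1 - |θ|)⁻¹` once `i ≥ k`; summing `i` over `i < k` and over `i < n` gives the bound.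
-/

open MeasureTheory ProbabilityTheory Finset

section StrictPast

variable {Ω : Type*} {mΩ : MeasurableSpace Ω} {μ : Measure Ω} {η G : ℕ → Ω → ℝ}

abbrev strictPast (η : ℕ → Ω → ℝ) (i : ℕ) : MeasurableSpace Ω :=
  ⨆ j ∈ Set.Iio i, MeasurableSpace.comap (η j) inferInstance

theorem strictPast_mono : Monotone (strictPast η) :=
  fun _ _ hij => biSup_mono fun _ hj => lt_of_lt_of_le hj hij

theorem strictPast_le (hηm : ∀ i, Measurable (η i)) (i : ℕ) : strictPast η i ≤ mΩ :=
  iSup₂_le fun j _ => (hηm j).comap_le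

theorem measurable_strictPast {i j : ℕ} (hji : j < i) : Measurable[strictPast η i] (η j) :=
  Measurable.of_comap_le (le_iSup₂_of_le j hji le_rfl)

variable (hη : iIndepFun η μ) (hηm : ∀ i, Measurable (η i))
include hη hηm

theorem ProbabilityTheory.iIndepFun.indepFun_of_measurable_strictPast {i : ℕ} {Y : Ω → ℝ}
    (hY : Measurable[strictPast η i] Y) : IndepFun (η i) Y μ := by
  have h := indep_iSup_of_disjoint (fun j => (hηm j).comap_le) hη.iIndep
    (S := {i}) (T := Set.Iio i) (by simp)
  rw [IndepFun_iff_Indep]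
  simp only [Set.mem_singleton_iff, iSup_iSup_eq_left] at h
  exact indep_of_indep_of_le_right h hY.comap_le

theorem memLp_two_mul_of_measurable_strictPast {i : ℕ} {Y : Ω → ℝ}
    (hY : Measurable[strictPast η i] Y) (hη2 : MemLp (η i) 2 μ) (hY2 : MemLp Y 2 μ) :
    MemLp (fun ω => η i ω * Y ω) 2 μ := by
  have hsq := (hη.indepFun_of_measurable_strictPast hηm hY).comp
    (measurable_id.pow_const 2) (measurable_id.pow_const 2)
  refine (memLp_two_iff_integrable_sq (f := fun ω => η i ω * Y ω) (hη2.1.mul hY2.1)).2 ?_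
  simpa [Function.comp_def, mul_pow, Pi.mul_def] using
    hsq.integrable_mul hη2.integrable_sq hY2.integrable_sq

theorem integral_sq_mul_eq_of_measurable_strictPast {i : ℕ} {Y : Ω → ℝ}
    (hY : Measurable[strictPast η i] Y) :
    ∫ ω, (η i ω * Y ω) ^ 2 ∂μ = (∫ ω, η i ω ^ 2 ∂μ) * ∫ ω, Y ω ^ 2 ∂μ := by
  have hsq := (hη.indepFun_of_measurable_strictPast hηm hY).comp
    (measurable_id.pow_const 2) (measurable_id.pow_const 2)
  simp only [mul_pow]
  exact hsq.integral_fun_mul_eq_mul_integral ((hηm i).pow_const 2).aestronglyMeasurable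
    ((hY.mono (strictPast_le hηm i) le_rfl).pow_const 2).aestronglyMeasurable

variable (hmean : ∀ i, ∫ ω, η i ω ∂μ = 0)
include hmean

theorem integral_mul_eq_zero_of_measurable_strictPast {i : ℕ} {Y : Ω → ℝ}
    (hY : Measurable[strictPast η i] Y) : ∫ ω, η i ω * Y ω ∂μ = 0 := by
  rw [(hη.indepFun_of_measurable_strictPast hηm hY).integral_fun_mul_eq_mul_integral
    (hηm i).aestronglyMeasurable (hY.mono (strictPast_le hηm i) le_rfl).aestronglyMeasurable,
    hmean, zero_mul]

variable (hG : ∀ i, Measurable[strictPast η i] (G i))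
include hG

theorem integral_sum_mul_eq_zero (s : Finset ℕ)
    (hint : ∀ i ∈ s, Integrable (fun ω => η i ω * G i ω) μ) :
    ∫ ω, ∑ i ∈ s, η i ω * G i ω ∂μ = 0 := by
  rw [integral_finsetSum s hint]
  exact sum_eq_zero fun i _ => integral_mul_eq_zero_of_measurable_strictPast hη hηm hmean (hG i)

theorem integral_mul_mul_eq_zero_of_lt {i j : ℕ} (hij : i < j) :
    ∫ ω, (η i ω * G i ω) * (η j ω * G j ω) ∂μ = 0 := by
  have hpast : Measurable[strictPast η j] (fun ω => η i ω * G i ω * G j ω) :=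
    ((measurable_strictPast hij).mul ((hG i).mono (strictPast_mono hij.le) le_rfl)).mul (hG j)
  rw [← integral_mul_eq_zero_of_measurable_strictPast hη hηm hmean hpast]
  congr 1 with ω
  ring

theorem integral_sq_sum_mul_eq (s : Finset ℕ) (hη2 : ∀ i ∈ s, MemLp (η i) 2 μ)
    (hG2 : ∀ i ∈ s, MemLp (G i) 2 μ) :
    ∫ ω, (∑ i ∈ s, η i ω * G i ω) ^ 2 ∂μ =
      ∑ i ∈ s, (∫ ω, η i ω ^ 2 ∂μ) * ∫ ω, G i ω ^ 2 ∂μ := by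
  have hZ2 : ∀ i ∈ s, MemLp (fun ω => η i ω * G i ω) 2 μ := fun i hi =>
    memLp_two_mul_of_measurable_strictPast hη hηm (hG i) (hη2 i hi) (hG2 i hi)
  have hcross : ∀ i ∈ s, ∀ j ∈ s, j ≠ i →
      ∫ ω, (η i ω * G i ω) * (η j ω * G j ω) ∂μ = 0 := by
    intro i _ j _ hji
    rcases hji.lt_or_gt with hlt | hlt
    · simp_rw [mul_comm (η i _ * G i _)]
      exact integral_mul_mul_eq_zero_of_lt hη hηm hmean hG hlt
    · exact integral_mul_mul_eq_zero_of_lt hη hηm hmean hG hlt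
  have hexpand : ∀ ω, (∑ i ∈ s, η i ω * G i ω) ^ 2 =
      ∑ i ∈ s, ∑ j ∈ s, (η i ω * G i ω) * (η j ω * G j ω) := fun ω => by
    rw [sq, sum_mul_sum]
  simp_rw [hexpand]
  rw [integral_finsetSum s (f := fun i ω => ∑ j ∈ s, (η i ω * G i ω) * (η j ω * G j ω))
    fun i hi => integrable_finsetSum s fun j hj => (hZ2 i hi).integrable_mul (hZ2 j hj)]
  refine sum_congr rfl fun i hi => ?_
  rw [integral_finsetSum s (f := fun j ω => (η i ω * G i ω) * (η j ω * G j ω))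
      fun j hj => (hZ2 i hi).integrable_mul (hZ2 j hj),
    sum_eq_single_of_mem i hi (hcross i hi)]
  simp only [← sq]
  exact integral_sq_mul_eq_of_measurable_strictPast hη hηm (hG i)

end StrictPast

section LagSum

variable {Ω : Type*} {mΩ : MeasurableSpace Ω} {μ : Measure Ω}

def lagSum (θ : ℝ) (Y : ℕ → Ω → ℝ) (a i : ℕ) (ω : Ω) : ℝ :=
  ∑ j ∈ Ico a (i + 1), θ ^ j * Y (i - j) ω

theorem measurable_lagSum {F : ℕ → MeasurableSpace Ω} (hF : Monotone F) (θ : ℝ)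
    {Y : ℕ → Ω → ℝ} (hY : ∀ m, Measurable[F m] (Y m)) (a i : ℕ) :
    Measurable[F i] (lagSum θ Y a i) :=
  Finset.measurable_fun_sum _ fun j _ =>
    ((hY (i - j)).mono (hF (Nat.sub_le i j)) le_rfl).const_mul _

theorem memLp_lagSum (θ : ℝ) {Y : ℕ → Ω → ℝ} {p : ENNReal} (hY : ∀ m, MemLp (Y m) p μ)
    (a i : ℕ) : MemLp (lagSum θ Y a i) p μ :=
  memLp_finsetSum _ fun j _ => (hY (i - j)).const_mul _

theorem integral_sq_sum_mul_le {ι : Type*} (s : Finset ι) (w : ι → ℝ) {Y : ι → Ω → ℝ} {C : ℝ}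
    (hY : ∀ j ∈ s, MemLp (Y j) 2 μ) (hC : ∀ j ∈ s, ∫ ω, Y j ω ^ 2 ∂μ ≤ C) :
    ∫ ω, (∑ j ∈ s, w j * Y j ω) ^ 2 ∂μ ≤ (∑ j ∈ s, |w j|) ^ 2 * C := by
  have hW : 0 ≤ ∑ j ∈ s, |w j| := sum_nonneg fun j _ => abs_nonneg _
  have hcs : ∀ ω, (∑ j ∈ s, w j * Y j ω) ^ 2 ≤
      (∑ j ∈ s, |w j|) * ∑ j ∈ s, |w j| * Y j ω ^ 2 := fun ω =>
    sum_sq_le_sum_mul_sum_of_sq_le_mul s (fun j _ => abs_nonneg _) (fun j _ => by positivity)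
      fun j _ => by rw [mul_pow, ← mul_assoc, abs_mul_abs_self, sq]
  have hint : ∀ j ∈ s, Integrable (fun ω => |w j| * Y j ω ^ 2) μ :=
    fun j hj => (hY j hj).integrable_sq.const_mul _
  calc ∫ ω, (∑ j ∈ s, w j * Y j ω) ^ 2 ∂μ
      ≤ ∫ ω, (∑ j ∈ s, |w j|) * ∑ j ∈ s, |w j| * Y j ω ^ 2 ∂μ :=
        integral_mono (memLp_finsetSum s fun j hj => (hY j hj).const_mul (w j)).integrable_sq
          ((integrable_finsetSum s hint).const_mul _) hcs
    _ = (∑ j ∈ s, |w j|) * ∑ j ∈ s, |w j| * ∫ ω, Y j ω ^ 2 ∂μ := by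
        rw [integral_const_mul, integral_finsetSum s hint]
        simp only [integral_const_mul]
    _ ≤ (∑ j ∈ s, |w j|) * ∑ j ∈ s, |w j| * C := by gcongr with j hj; exact hC j hj
    _ = (∑ j ∈ s, |w j|) ^ 2 * C := by rw [← sum_mul]; ring

theorem integral_sq_lagSum_le (θ : ℝ) {Y : ℕ → Ω → ℝ} (hY : ∀ m, MemLp (Y m) 2 μ) {C : ℝ}
    (a i : ℕ) (hC : ∀ m ≤ i, ∫ ω, Y m ω ^ 2 ∂μ ≤ C) :
    ∫ ω, lagSum θ Y a i ω ^ 2 ∂μ ≤ (∑ j ∈ Ico a (i + 1), |θ| ^ j) ^ 2 * C := by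
  simpa only [lagSum, abs_pow] using
    integral_sq_sum_mul_le (Ico a (i + 1)) (θ ^ ·) (fun j _ => hY (i - j))
      fun j _ => hC (i - j) (Nat.sub_le i j)

end LagSum

section Truncation

noncomputable def truncate (c d x : ℝ) : ℝ := x / d * if x ≤ c then 1 else 0

theorem measurable_truncate (c d : ℝ) : Measurable (truncate c d) :=
  (measurable_id.div_const d).mul <| Measurable.ite
    (measurableSet_le measurable_id measurable_const) measurable_const measurable_const

theorem abs_truncate_le (c d x : ℝ) : |truncate c d x| ≤ |x / d| := by
  unfold truncate; split_ifs <;> simp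

variable {Ω : Type*} {mΩ : MeasurableSpace Ω} {μ : Measure Ω} {f : Ω → ℝ}

theorem MeasureTheory.MemLp.truncate {p : ENNReal} (hf : MemLp f p μ) (c d : ℝ) :
    MemLp (fun ω => truncate c d (f ω)) p μ :=
  (hf.const_mul d⁻¹).of_le
    ((measurable_truncate c d).comp_aemeasurable hf.1.aemeasurable).aestronglyMeasurable
    (Filter.Eventually.of_forall fun ω => by
      simpa only [Real.norm_eq_abs, div_eq_inv_mul] using abs_truncate_le c d (f ω))

theorem integral_sq_truncate_le (hf : MemLp f 2 μ) {C : ℝ} (hC : ∫ ω, f ω ^ 2 ∂μ ≤ C)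
    (c d : ℝ) : ∫ ω, truncate c d (f ω) ^ 2 ∂μ ≤ C / d ^ 2 := by
  refine (integral_mono (hf.truncate c d).integrable_sq (hf.integrable_sq.div_const (d ^ 2))
    fun ω => ?_).trans ?_
  · rw [← div_pow, ← sq_abs, ← sq_abs (f ω / d)]
    exact pow_le_pow_left₀ (abs_nonneg _) (abs_truncate_le c d (f ω)) 2
  · rw [integral_div]; gcongr

end Truncation

section IMA

variable {Ω : Type*} {mΩ : MeasurableSpace Ω} {μ : Measure Ω} {θ : ℝ} {ε X : ℕ → Ω → ℝ}

theorem measurable_strictPast_innovation (hε0 : ∀ ω, ε 0 ω = 0) (m : ℕ) :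
    Measurable[strictPast (fun i => ε (i + 1)) m] (ε m) := by
  cases m with
  | zero => simpa only [funext hε0] using measurable_const
  | succ m => exact measurable_strictPast (η := fun i => ε (i + 1)) (lt_add_one m)

variable (hε0 : ∀ ω, ε 0 ω = 0) (hX0 : ∀ ω, X 0 ω = 0)
  (hXrec : ∀ t ω, X (t + 1) ω = X t ω + ε (t + 1) ω - θ * ε t ω)
include hε0 hX0 hXrec

theorem measurable_strictPast_ima (m : ℕ) :
    Measurable[strictPast (fun i => ε (i + 1)) m] (X m) := by
  induction m with
  | zero => simpa only [funext hX0] using measurable_const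
  | succ m ih =>
    have hmono := strictPast_mono (η := fun i => ε (i + 1)) m.le_succ
    rw [funext (hXrec m)]
    exact ((ih.mono hmono le_rfl).add (measurable_strictPast_innovation hε0 (m + 1))).sub
      (((measurable_strictPast_innovation hε0 m).mono hmono le_rfl).const_mul θ)

theorem memLp_ima {p : ENNReal} (hε : ∀ t, MemLp (ε (t + 1)) p μ) (m : ℕ) :
    MemLp (X m) p μ := by
  have hεp : ∀ t, MemLp (ε t) p μ
    | 0 => by rw [funext hε0]; exact MemLp.zero
    | t + 1 => hε t
  induction m with
  | zero => rw [funext hX0]; exact MemLp.zero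
  | succ m ih => rw [funext (hXrec m)]; exact (ih.add (hεp (m + 1))).sub ((hεp m).const_mul θ)

theorem integral_sq_lagSum_truncate_ima_le (hε : ∀ t, MemLp (ε (t + 1)) 2 μ) {K σ : ℝ}
    (hK : 0 ≤ K) (hσ : σ ≠ 0) (hKbd : ∀ t : ℕ, 1 ≤ t → ∫ ω, X t ω ^ 2 ∂μ ≤ t * K * σ ^ 2)
    (c : ℝ) (n a i : ℕ) :
    ∫ ω, lagSum θ (fun m ω => truncate c (Real.sqrt n * σ) (X m ω)) a i ω ^ 2 ∂μ ≤
      (∑ j ∈ Ico a (i + 1), |θ| ^ j) ^ 2 * (i * K / n) := by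
  have hX2 := memLp_ima hε0 hX0 hXrec hε
  have hXsq : ∀ m : ℕ, ∫ ω, X m ω ^ 2 ∂μ ≤ m * K * σ ^ 2
    | 0 => by simp [hX0]
    | m + 1 => hKbd (m + 1) (Nat.le_add_left 1 m)
  refine integral_sq_lagSum_le θ (fun m => (hX2 m).truncate _ _) a i fun m hm => ?_
  calc _ ≤ m * K * σ ^ 2 / (Real.sqrt n * σ) ^ 2 := integral_sq_truncate_le (hX2 m) (hXsq m) _ _
    _ = m * K / n := by
      rw [mul_pow, Real.sq_sqrt n.cast_nonneg, mul_div_mul_right _ _ (pow_ne_zero 2 hσ)]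
    _ ≤ i * K / n := by gcongr

end IMA

section LagArithmetic

/-- At time `t = i + 1`, `D` keeps the lags `j ∈ [lagStart k i, i]`: all of them while `t ≤ k`,
only those beyond `k` afterwards. -/
def lagStart (k i : ℕ) : ℕ := if i < k then 0 else k + 1

theorem sum_Icc_sub_sum_Icc_eq_sum_range_lagStart (a : ℕ → ℝ) (F : ℕ → ℕ → ℝ) (k n : ℕ) :
    ∑ t ∈ Icc 1 n, a t * ∑ j ∈ range t, F t j -
        ∑ t ∈ Icc (k + 1) n, a t * ∑ j ∈ range (k + 1), F t j =
      ∑ i ∈ range n, a (i + 1) * ∑ j ∈ Ico (lagStart k i) (i + 1), F (i + 1) j := by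
  have hshift : ∀ f : ℕ → ℝ, ∑ t ∈ Icc 1 n, f t = ∑ i ∈ range n, f (i + 1) := fun f => by
    rw [range_eq_Ico, sum_Ico_add' f 0 n 1]; rfl
  have hshift' : ∀ f : ℕ → ℝ,
      ∑ t ∈ Icc (k + 1) n, f t = ∑ i ∈ range n, if k ≤ i then f (i + 1) else 0 := fun f => by
    have hfilter : (range n).filter (k ≤ ·) = Ico k n := by ext; simp; omega
    rw [← sum_filter, hfilter, sum_Ico_add' f k n 1]; rfl
  rw [hshift, hshift', ← sum_sub_distrib]
  refine sum_congr rfl fun i _ => ?_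
  unfold lagStart
  split_ifs with hki hik hik
  · omega
  · rw [← mul_sub, sum_Ico_eq_sub _ (by omega)]
  · rw [sub_zero, range_eq_Ico]
  · omega

theorem sq_sum_Ico_lagStart_pow_le {a : ℝ} (ha0 : 0 ≤ a) (ha1 : a < 1) (k i : ℕ) :
    (∑ j ∈ Ico (lagStart k i) (i + 1), a ^ j) ^ 2 ≤
      (if i < k then 1 else a ^ (k + 1)) / (1 - a) ^ 2 := by
  have hS0 : 0 ≤ ∑ j ∈ Ico (lagStart k i) (i + 1), a ^ j :=
    sum_nonneg fun j _ => pow_nonneg ha0 j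
  calc _ ≤ (a ^ lagStart k i / (1 - a)) ^ 2 :=
        pow_le_pow_left₀ hS0 (geom_sum_Ico_le_of_lt_one ha0 ha1) 2
    _ ≤ _ := by
      rw [div_pow, ← pow_mul]
      gcongr
      unfold lagStart
      split_ifs
      · simp
      · exact pow_le_pow_of_le_one ha0 ha1.le (by omega)

theorem sum_range_mul_ite_le {b : ℝ} (hb : 0 ≤ b) (k n : ℕ) :
    ∑ i ∈ range n, (i : ℝ) * (if i < k then 1 else b) ≤ k * (k - 1) / 2 + b * n ^ 2 / 2 := by
  have hgauss : ∀ m : ℕ, ∑ i ∈ range m, (i : ℝ) = m * (m - 1) / 2 := fun m => by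
    induction m with
    | zero => simp
    | succ m ih => rw [sum_range_succ, ih]; push_cast; ring
  calc ∑ i ∈ range n, (i : ℝ) * (if i < k then 1 else b)
      ≤ ∑ i ∈ range n, ((if i < k then (i : ℝ) else 0) + b * i) := sum_le_sum fun i _ => by
        split_ifs <;> nlinarith [mul_nonneg hb (Nat.cast_nonneg (α := ℝ) i)]
    _ ≤ ∑ i ∈ range k, (i : ℝ) + b * ∑ i ∈ range n, (i : ℝ) := by
        rw [sum_add_distrib, ← sum_filter, ← mul_sum]
        gcongr
        exact fun i hi => by simp only [mem_filter, mem_range] at hi ⊢; exact hi.2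
    _ ≤ k * (k - 1) / 2 + b * n ^ 2 / 2 := by
        rw [hgauss, hgauss]
        nlinarith [mul_nonneg hb (Nat.cast_nonneg (α := ℝ) n)]

theorem inv_mul_sum_sq_sum_Ico_lagStart_pow_le {a K : ℝ} (ha0 : 0 ≤ a) (ha1 : a < 1)
    (hK : 0 ≤ K) (k : ℕ) {n : ℕ} (hn : 0 < n) :
    (n : ℝ)⁻¹ * ∑ i ∈ range n, (∑ j ∈ Ico (lagStart k i) (i + 1), a ^ j) ^ 2 * (i * K / n) ≤
      K / (1 - a) ^ 2 * (k * (k - 1) / (2 * n ^ 2) + a ^ (k + 1) / 2) := by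
  have hnR : (0 : ℝ) < n := Nat.cast_pos.2 hn
  calc _ = K / n ^ 2 * ∑ i ∈ range n, (∑ j ∈ Ico (lagStart k i) (i + 1), a ^ j) ^ 2 * i := by
        rw [mul_sum, mul_sum]; exact sum_congr rfl fun i _ => by ring
    _ ≤ K / n ^ 2 * ∑ i ∈ range n, (if i < k then 1 else a ^ (k + 1)) / (1 - a) ^ 2 * i := by
        gcongr with i; exact sq_sum_Ico_lagStart_pow_le ha0 ha1 k i
    _ = K / n ^ 2 / (1 - a) ^ 2 *
          ∑ i ∈ range n, (i : ℝ) * (if i < k then 1 else a ^ (k + 1)) := by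
        rw [mul_sum, mul_sum]; exact sum_congr rfl fun i _ => by ring
    _ ≤ K / n ^ 2 / (1 - a) ^ 2 * (k * (k - 1) / 2 + a ^ (k + 1) * n ^ 2 / 2) := by
        gcongr; exact sum_range_mul_ite_le (pow_nonneg ha0 _) k n
    _ = _ := by field_simp

end LagArithmetic

theorem stmt_12_general {Ω : Type*} [MeasureSpace Ω] [IsProbabilityMeasure (ℙ : Measure Ω)]
    (θ σ τ : ℝ) (hθ : |θ| < 1) (hσ : 0 < σ)
    (ε : ℕ → Ω → ℝ) (hε0 : ∀ ω, ε 0 ω = 0)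
    (hmeas : ∀ t, Measurable (ε t))
    (hindep : iIndepFun (fun t => ε (t + 1)) ℙ)
    (hL2 : ∀ t, MemLp (ε (t + 1)) 2 ℙ)
    (hmean : ∀ t, ∫ ω, ε (t + 1) ω ∂ℙ = 0)
    (hvar : ∀ t, ∫ ω, (ε (t + 1) ω) ^ 2 ∂ℙ = σ ^ 2)
    (X : ℕ → Ω → ℝ) (hX0 : ∀ ω, X 0 ω = 0)
    (hXrec : ∀ t ω, X (t + 1) ω = X t ω + ε (t + 1) ω - θ * ε t ω)
    (K : ℝ) (hK : 0 < K) (hKbd : ∀ t : ℕ, 1 ≤ t → ∫ ω, (X t ω) ^ 2 ∂ℙ ≤ t * K * σ ^ 2)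
    (k n : ℕ) (hn : 1 ≤ n)
    (L A D : Ω → ℝ)
    (hL : ∀ ω, L ω = (Real.sqrt n)⁻¹ * ∑ t ∈ Icc 1 n, (ε t ω / σ) *
      ∑ j ∈ range t, θ ^ j * (X (t - 1 - j) ω / (Real.sqrt n * σ)) *
        (if X (t - 1 - j) ω ≤ Real.sqrt n * (1 - θ) * σ * τ then 1 else 0))
    (hA : ∀ ω, A ω = (Real.sqrt n)⁻¹ * ∑ t ∈ Icc (k + 1) n, (ε t ω / σ) *
      ∑ j ∈ range (k + 1), θ ^ j * (X (t - 1 - j) ω / (Real.sqrt n * σ)) *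
        (if X (t - 1 - j) ω ≤ Real.sqrt n * (1 - θ) * σ * τ then 1 else 0))
    (hD : ∀ ω, D ω = L ω - A ω) :
    ∫ ω, D ω ∂ℙ = 0 ∧
    ∫ ω, (D ω) ^ 2 ∂ℙ - (∫ ω, D ω ∂ℙ) ^ 2 ≤
      (K / (1 - |θ|) ^ 2) * ((k : ℝ) * ((k : ℝ) - 1) / (2 * (n : ℝ) ^ 2) + |θ| ^ (k + 1) / 2) := by
  set η : ℕ → Ω → ℝ := fun i => ε (i + 1)
  set S : ℕ → Ω → ℝ := fun i => lagSum θ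
    (fun m ω => truncate (Real.sqrt n * (1 - θ) * σ * τ) (Real.sqrt n * σ) (X m ω)) (lagStart k i) i
  have hDsum : ∀ ω, D ω = (Real.sqrt n * σ)⁻¹ * ∑ i ∈ range n, η i ω * S i ω := fun ω => by
    rw [hD, hL, hA, ← mul_sub, sum_Icc_sub_sum_Icc_eq_sum_range_lagStart, mul_sum, mul_sum]
    refine sum_congr rfl fun i _ => ?_
    simp only [η, S, lagSum, truncate, Nat.add_sub_cancel, mul_sum]
    exact sum_congr rfl fun j _ => by ring
  have hηm : ∀ i, Measurable (η i) := fun i => hmeas (i + 1)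
  have hX2 : ∀ m, MemLp (X m) 2 ℙ := memLp_ima hε0 hX0 hXrec hL2
  have hSm : ∀ i, Measurable[strictPast η i] (S i) := fun i =>
    measurable_lagSum strictPast_mono θ
      (fun m => (measurable_truncate _ _).comp (measurable_strictPast_ima hε0 hX0 hXrec m)) _ i
  have hS2 : ∀ i, MemLp (S i) 2 ℙ := fun i => memLp_lagSum θ (fun m => (hX2 m).truncate _ _) _ i
  have hmeanD : ∫ ω, D ω ∂ℙ = 0 := by
    simp_rw [hDsum]
    rw [integral_const_mul, integral_sum_mul_eq_zero hindep hηm hmean hSm _ fun i _ =>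
      (memLp_two_mul_of_measurable_strictPast hindep hηm (hSm i) (hL2 i) (hS2 i)).integrable
        one_le_two, mul_zero]
  refine ⟨hmeanD, ?_⟩
  calc ∫ ω, D ω ^ 2 ∂ℙ - (∫ ω, D ω ∂ℙ) ^ 2
      = (n : ℝ)⁻¹ * ∑ i ∈ range n, ∫ ω, S i ω ^ 2 ∂ℙ := by
        rw [hmeanD, zero_pow two_ne_zero, sub_zero]
        simp_rw [hDsum, mul_pow]
        rw [integral_const_mul, integral_sq_sum_mul_eq hindep hηm hmean hSm _ (fun i _ => hL2 i)
          (fun i _ => hS2 i)]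
        simp only [η, hvar, ← mul_sum, inv_pow, mul_pow, Real.sq_sqrt n.cast_nonneg]
        field_simp
    _ ≤ (n : ℝ)⁻¹ * ∑ i ∈ range n,
          (∑ j ∈ Ico (lagStart k i) (i + 1), |θ| ^ j) ^ 2 * (i * K / n) := by
        gcongr with i
        exact integral_sq_lagSum_truncate_ima_le hε0 hX0 hXrec hL2 hK.le hσ.ne' hKbd _ n _ i
    _ ≤ _ := inv_mul_sum_sq_sum_Ico_lagStart_pow_le (abs_nonneg θ) hθ hK.le k hn

/-- For the IMA(1,1) process `X 0 = 0`, `ε 0 = 0`,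
`X (t+1) = X t + ε (t+1) - θ ε t` with i.i.d. innovations (`t ≥ 1`) of mean 0 and
variance `σ²`, `|θ| < 1`, fix `τ ∈ ℝ` and `k`, and set
`D = n⁻¹ ∂ℓ/∂φ₁₁ - A_{n,k}` as in the text.  Then `E[D] = 0` and
`Var(D) ≤ (K/(1-|θ|)²)·(k(k-1)/(2n²) + |θ|^{k+1}/2)` for any `K > 0` with
`E[X_t²] ≤ t K σ²` for all `t ≥ 1`. -/
theorem stmt_12 {Ω : Type*} [MeasureSpace Ω] [IsProbabilityMeasure (ℙ : Measure Ω)]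
    (θ σ τ : ℝ) (hθ : |θ| < 1) (hσ : 0 < σ)
    (ε : ℕ → Ω → ℝ) (hε0 : ∀ ω, ε 0 ω = 0)
    (hmeas : ∀ t, Measurable (ε t))
    (hindep : iIndepFun (fun t => ε (t + 1)) ℙ)
    (hid : ∀ s t, Measure.map (ε (s + 1)) ℙ = Measure.map (ε (t + 1)) ℙ)
    (hL2 : ∀ t, MemLp (ε (t + 1)) 2 ℙ)
    (hmean : ∀ t, ∫ ω, ε (t + 1) ω ∂ℙ = 0)
    (hvar : ∀ t, ∫ ω, (ε (t + 1) ω) ^ 2 ∂ℙ = σ ^ 2)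
    (X : ℕ → Ω → ℝ) (hX0 : ∀ ω, X 0 ω = 0)
    (hXrec : ∀ t ω, X (t + 1) ω = X t ω + ε (t + 1) ω - θ * ε t ω)
    (K : ℝ) (hK : 0 < K) (hKbd : ∀ t : ℕ, 1 ≤ t → ∫ ω, (X t ω) ^ 2 ∂ℙ ≤ t * K * σ ^ 2)
    (k n : ℕ) (hn : 1 ≤ n)
    (L A D : Ω → ℝ)
    (hL : ∀ ω, L ω = (Real.sqrt n)⁻¹ * ∑ t ∈ Icc 1 n, (ε t ω / σ) *
      ∑ j ∈ range t, θ ^ j * (X (t - 1 - j) ω / (Real.sqrt n * σ)) *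
        (if X (t - 1 - j) ω ≤ Real.sqrt n * (1 - θ) * σ * τ then 1 else 0))
    (hA : ∀ ω, A ω = (Real.sqrt n)⁻¹ * ∑ t ∈ Icc (k + 1) n, (ε t ω / σ) *
      ∑ j ∈ range (k + 1), θ ^ j * (X (t - 1 - j) ω / (Real.sqrt n * σ)) *
        (if X (t - 1 - j) ω ≤ Real.sqrt n * (1 - θ) * σ * τ then 1 else 0))
    (hD : ∀ ω, D ω = L ω - A ω) :
    ∫ ω, D ω ∂ℙ = 0 ∧
    ∫ ω, (D ω) ^ 2 ∂ℙ - (∫ ω, D ω ∂ℙ) ^ 2 ≤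
      (K / (1 - |θ|) ^ 2) * ((k : ℝ) * ((k : ℝ) - 1) / (2 * (n : ℝ) ^ 2) + |θ| ^ (k + 1) / 2) :=
  stmt_12_general θ σ τ hθ hσ ε hε0 hmeas hindep hL2 hmean hvar X hX0 hXrec K hK hKbd k n hn L A D
    hL hA hD
end
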